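/- arXiv:1005.5536 — 6 statements merged into one kernel-verified Lean document; each statement's English description precedes it below -/
import Mathlib

section
/- The integral over ξ from 0 to ∞ of (∫_ξ^∞ e^{-η²} dη · ∫_0^ξ e^{-η²} dη) / (ξ e^{-ξ²}) equals Catalan's constant, i.e. (4/√π) ∫_0^∞ [∫_ξ^∞ e^{-η²} dη · ∫_0^ξ e^{-η²} dη] / (ξ e^{-ξ²}) dξ = (4/√π) · G, where G = ∑_{n≥0} (-1)^n/(2n+1)² is Catalan's constant. -/
open Real MeasureTheory Set

noncomputable def catalanConstant : ℝ := ∑' n : ℕ, (-1) ^ n / (2 * (n : ℝ) + 1) ^ 2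

/-!
Substituting `η = ξ (1 + x²) / (2x)`, `x ∈ (0, 1)`, in `∫_ξ^∞ e^{-η²} dη` and `η = ξ s` in
`∫_0^ξ e^{-η²} dη` turns the integrand into a double integral over the unit square of
`a ξ e^{-c ξ²}`, where `c = ((1 - x²)² + 4x²s²) / (4x²)`. By Tonelli we may integrate in `ξ`
first, which leaves `(1 - x²) / ((1 - x²)² + 4x²s²)`. Its integral in `s` is
`arctan (2x / (1 - x²)) / (2x) = arctan x / x`, and integrating the power series of
`arctan x / x` termwise over `(0, 1)` gives `∑ (-1)ⁿ / (2n + 1)²`.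
-/

open Filter

lemma integrable_exp_neg_sq : Integrable fun x : ℝ => exp (-x ^ 2) := by
  simpa using integrable_exp_neg_mul_sq one_pos

lemma integral_Ioi_mul_exp_neg_mul_sq {b : ℝ} (hb : 0 < b) :
    ∫ x in Ioi (0 : ℝ), x * exp (-b * x ^ 2) = (2 * b)⁻¹ := by
  have h := integral_mul_cexp_neg_mul_sq (b := (b : ℂ)) (by simpa using hb)
  simp_rw [← Complex.ofReal_pow, ← Complex.ofReal_neg, ← Complex.ofReal_mul, ← Complex.ofReal_exp,
    ← Complex.ofReal_mul, integral_complex_ofReal] at h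
  exact_mod_cast h

lemma lintegral_Ioi_ofReal_mul_exp_neg_mul_sq {a c : ℝ} (ha : 0 ≤ a) (hc : 0 < c) :
    ∫⁻ ξ in Ioi (0 : ℝ), ENNReal.ofReal (a * ξ * exp (-c * ξ ^ 2))
      = ENNReal.ofReal (a / (2 * c)) := by
  have hint : IntegrableOn (fun ξ => a * ξ * exp (-c * ξ ^ 2)) (Ioi 0) := by
    simpa only [mul_assoc] using ((integrable_mul_exp_neg_mul_sq hc).const_mul a).integrableOn
  rw [← ofReal_integral_eq_lintegral_ofReal hint]
  · simp_rw [mul_assoc, integral_const_mul, integral_Ioi_mul_exp_neg_mul_sq hc, div_eq_mul_inv]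
  · filter_upwards [ae_restrict_mem measurableSet_Ioi] with ξ (hξ : 0 < ξ)
    positivity

lemma arctan_le_self {x : ℝ} (hx : 0 ≤ x) : arctan x ≤ x := by
  simpa only [tan_arctan] using le_tan (arctan_nonneg.2 hx) (arctan_lt_pi_div_two x)

lemma hasSum_arctan_div_self {x : ℝ} (hx0 : x ≠ 0) (hx : ‖x‖ < 1) :
    HasSum (fun n : ℕ => (-1) ^ n * x ^ (2 * n) / (2 * n + 1)) (arctan x / x) := by
  have h := (hasSum_arctan hx).div_const x
  rwa [show (fun n : ℕ => (-1) ^ n * x ^ (2 * n + 1) / ↑(2 * n + 1) / x)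
      = fun n : ℕ => (-1) ^ n * x ^ (2 * n) / (2 * n + 1) by
    funext n; push_cast; rw [pow_succ]; field_simp] at h

lemma integral_Ioo_zero_one_pow_two_mul (n : ℕ) :
    ∫ x in Ioo (0 : ℝ) 1, x ^ (2 * n) = 1 / (2 * n + 1) := by
  rw [← integral_Ioc_eq_integral_Ioo, ← intervalIntegral.integral_of_le zero_le_one,
    integral_pow]
  push_cast
  norm_num

lemma summable_one_div_two_mul_add_one_sq :
    Summable fun n : ℕ => 1 / (2 * (n : ℝ) + 1) ^ 2 := by
  have h := (summable_nat_add_iff 1).2 (summable_one_div_nat_pow.2 one_lt_two)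
  refine h.of_nonneg_of_le (fun n => by positivity) fun n => ?_
  push_cast
  gcongr
  linarith [n.cast_nonneg (α := ℝ)]

lemma integral_arctan_div_self : ∫ x in Ioo (0 : ℝ) 1, arctan x / x = catalanConstant := by
  set F : ℕ → ℝ → ℝ := fun n x => (-1) ^ n * x ^ (2 * n) / (2 * n + 1)
  have hF_int (n : ℕ) : IntegrableOn (F n) (Ioo 0 1) :=
    (continuous_const.mul (continuous_pow _)).div_const _ |>.integrableOn_Icc.mono_set
      Ioo_subset_Icc_self
  have hF (n : ℕ) : ∫ x in Ioo (0 : ℝ) 1, F n x = (-1) ^ n / (2 * n + 1) ^ 2 := by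
    simp only [F, integral_div, integral_const_mul, integral_Ioo_zero_one_pow_two_mul]
    field_simp
  have hF_norm (n : ℕ) : ∫ x in Ioo (0 : ℝ) 1, ‖F n x‖ = 1 / (2 * n + 1) ^ 2 := by
    have : ∀ x, ‖F n x‖ = x ^ (2 * n) / (2 * n + 1) := fun x => by
      simp [F, abs_of_pos (by positivity : (0 : ℝ) < 2 * n + 1), (even_two_mul n).pow_abs]
    simp only [this, integral_div, integral_Ioo_zero_one_pow_two_mul]
    field_simp
  have hsum : ∀ᵐ x ∂volume.restrict (Ioo (0 : ℝ) 1), arctan x / x = ∑' n, F n x := by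
    filter_upwards [ae_restrict_mem measurableSet_Ioo] with x hx
    have hx1 : ‖x‖ < 1 := by rw [norm_of_nonneg hx.1.le]; exact hx.2
    exact (hasSum_arctan_div_self hx.1.ne' hx1).tsum_eq.symm
  rw [integral_congr_ae hsum, ← integral_tsum_of_summable_integral_norm hF_int
    (by simpa only [hF_norm] using summable_one_div_two_mul_add_one_sq)]
  simp only [hF, catalanConstant]

lemma lintegral_arctan_div_self :
    ∫⁻ x in Ioo (0 : ℝ) 1, ENNReal.ofReal (arctan x / x) = ENNReal.ofReal catalanConstant := by
  have hbound : ∀ x ∈ Ioo (0 : ℝ) 1, 0 ≤ arctan x / x ∧ arctan x / x ≤ 1 := fun x hx =>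
    ⟨div_nonneg (arctan_nonneg.2 hx.1.le) hx.1.le, (div_le_one hx.1).2 (arctan_le_self hx.1.le)⟩
  have hint : IntegrableOn (fun x => arctan x / x) (Ioo 0 1) := by
    refine Measure.integrableOn_of_bounded (M := 1) measure_Ioo_lt_top.ne
      (measurable_arctan.div measurable_id).aestronglyMeasurable ?_
    filter_upwards [ae_restrict_mem measurableSet_Ioo] with x hx
    rw [norm_of_nonneg (hbound x hx).1]
    exact (hbound x hx).2
  rw [← ofReal_integral_eq_lintegral_ofReal hint, integral_arctan_div_self]
  filter_upwards [ae_restrict_mem measurableSet_Ioo] with x hx using (hbound x hx).1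

lemma catalanConstant_nonneg : 0 ≤ catalanConstant :=
  integral_arctan_div_self ▸ setIntegral_nonneg measurableSet_Ioo fun _ hx =>
    div_nonneg (arctan_nonneg.2 hx.1.le) hx.1.le

lemma integral_div_sq_add_mul_sq {a b : ℝ} (ha : 0 < a) (hb : b ≠ 0) :
    ∫ s in (0 : ℝ)..1, a / (a ^ 2 + (b * s) ^ 2) = arctan (b / a) / b := by
  have hderiv (s : ℝ) :
      HasDerivAt (fun s => arctan (b / a * s) / b) (a / (a ^ 2 + (b * s) ^ 2)) s := by
    refine ((((hasDerivAt_id' s).const_mul (b / a)).arctan).div_const b).congr_deriv ?_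
    field_simp
  have hcont : Continuous fun s => a / (a ^ 2 + (b * s) ^ 2) :=
    continuous_const.div (by fun_prop) fun s => by positivity
  rw [intervalIntegral.integral_eq_sub_of_hasDerivAt (fun s _ => hderiv s)
    (hcont.intervalIntegrable 0 1)]
  simp

lemma lintegral_Ioo_div_sq_add_mul_sq {x : ℝ} (hx : x ∈ Ioo (0 : ℝ) 1) :
    ∫⁻ s in Ioo (0 : ℝ) 1, ENNReal.ofReal ((1 - x ^ 2) / ((1 - x ^ 2) ^ 2 + (2 * x * s) ^ 2))
      = ENNReal.ofReal (arctan x / x) := by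
  obtain ⟨hx0, hx1⟩ := hx
  have ha : 0 < 1 - x ^ 2 := by nlinarith
  have hint : IntegrableOn (fun s => (1 - x ^ 2) / ((1 - x ^ 2) ^ 2 + (2 * x * s) ^ 2)) (Ioo 0 1) :=
    (continuous_const.div (by fun_prop) fun s => by positivity).integrableOn_Icc.mono_set
      Ioo_subset_Icc_self
  rw [← ofReal_integral_eq_lintegral_ofReal hint
    (Eventually.of_forall fun s => by positivity), ← integral_Ioc_eq_integral_Ioo,
    ← intervalIntegral.integral_of_le zero_le_one, integral_div_sq_add_mul_sq ha (by positivity),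
    ← two_mul_arctan (by linarith) hx1]
  field_simp

lemma image_mul_one_add_sq_div_Ioo {ξ : ℝ} (hξ : 0 < ξ) :
    (fun x => ξ * (1 + x ^ 2) / (2 * x)) '' Ioo 0 1 = Ioi ξ := by
  refine Subset.antisymm ?_ fun η (hη : ξ < η) => ?_
  · rintro _ ⟨x, ⟨hx0, hx1⟩, rfl⟩
    rw [mem_Ioi, lt_div_iff₀ (by positivity)]
    nlinarith [mul_pos hξ (pow_pos (sub_pos.2 hx1) 2)]
  · set y := η / ξ
    have hy : 1 < y := (one_lt_div hξ).2 hη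
    have hr := sq_sqrt (by nlinarith : 0 ≤ y ^ 2 - 1)
    have hry : sqrt (y ^ 2 - 1) < y := by nlinarith [sqrt_nonneg (y ^ 2 - 1)]
    have hr1 : y - 1 < sqrt (y ^ 2 - 1) := by nlinarith [sqrt_nonneg (y ^ 2 - 1)]
    refine ⟨y - sqrt (y ^ 2 - 1), ⟨by linarith, by linarith⟩, ?_⟩
    rw [div_eq_iff (by linarith), show η = ξ * y by rw [mul_div_cancel₀ _ hξ.ne']]
    linear_combination ξ * hr

lemma injOn_mul_one_add_sq_div_Ioo (ξ : ℝ) (hξ : ξ ≠ 0) :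
    InjOn (fun x => ξ * (1 + x ^ 2) / (2 * x)) (Ioo 0 1) := by
  rintro a ⟨ha0, ha1⟩ b ⟨hb0, hb1⟩ hab
  rw [div_eq_div_iff (by positivity) (by positivity)] at hab
  have : (a - b) * (1 - a * b) = 0 := by
    apply mul_left_cancel₀ hξ
    linear_combination -hab / 2
  rcases mul_eq_zero.1 this with h | h
  · linarith
  · nlinarith [mul_lt_mul'' ha1 hb1 ha0.le hb0.le]

lemma lintegral_Ioi_eq_lintegral_Ioo_comp {ξ : ℝ} (hξ : 0 < ξ) (g : ℝ → ENNReal) :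
    ∫⁻ η in Ioi ξ, g η = ∫⁻ x in Ioo 0 1,
      ENNReal.ofReal (ξ * (1 - x ^ 2) / (2 * x ^ 2)) * g (ξ * (1 + x ^ 2) / (2 * x)) := by
  have hderiv : ∀ x ∈ Ioo (0 : ℝ) 1, HasDerivWithinAt (fun x => ξ * (1 + x ^ 2) / (2 * x))
      (-(ξ * (1 - x ^ 2) / (2 * x ^ 2))) (Ioo 0 1) x := fun x hx => by
    refine ((((hasDerivAt_pow 2 x).const_add 1).const_mul ξ).div
      ((hasDerivAt_id' x).const_mul 2) (mul_pos two_pos hx.1).ne').hasDerivWithinAt.congr_deriv ?_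
    field_simp [hx.1.ne']
    ring
  rw [← image_mul_one_add_sq_div_Ioo hξ, lintegral_image_eq_lintegral_abs_deriv_mul
    measurableSet_Ioo hderiv (injOn_mul_one_add_sq_div_Ioo ξ hξ.ne')]
  refine setLIntegral_congr_fun measurableSet_Ioo fun x ⟨hx0, hx1⟩ => ?_
  have h : 0 ≤ 1 - x ^ 2 := by nlinarith
  rw [abs_neg, abs_of_nonneg (div_nonneg (mul_nonneg hξ.le h) (by positivity))]

namespace CatalanIntegral

noncomputable def kernel (ξ x s : ℝ) : ℝ :=
  (1 - x ^ 2) / (2 * x ^ 2) * ξ * exp (-(((1 - x ^ 2) ^ 2 + (2 * x * s) ^ 2) / (2 * x) ^ 2) * ξ ^ 2)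

lemma integrand_nonneg {ξ : ℝ} (hξ : 0 < ξ) :
    0 ≤ ((∫ η in Ioi ξ, exp (-η ^ 2)) * ∫ η in (0 : ℝ)..ξ, exp (-η ^ 2)) / (ξ * exp (-ξ ^ 2)) :=
  div_nonneg (mul_nonneg (setIntegral_nonneg measurableSet_Ioi fun η _ => (exp_pos _).le)
    (intervalIntegral.integral_nonneg hξ.le fun η _ => (exp_pos _).le)) (by positivity)

lemma ofReal_integrand_eq_lintegral_lintegral_kernel {ξ : ℝ} (hξ : 0 < ξ) :
    ENNReal.ofReal (((∫ η in Ioi ξ, exp (-η ^ 2)) * ∫ η in (0 : ℝ)..ξ, exp (-η ^ 2)) /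
        (ξ * exp (-ξ ^ 2)))
      = ∫⁻ x in Ioo 0 1, ∫⁻ s in Ioo 0 1, ENNReal.ofReal (kernel ξ x s) := by
  set I := ∫ s in Ioo (0 : ℝ) 1, exp (-(ξ * s) ^ 2) with hI_def
  have hF : ∫ η in (0 : ℝ)..ξ, exp (-η ^ 2) = ξ * I := by
    have := intervalIntegral.integral_comp_mul_left (fun η => exp (-η ^ 2)) hξ.ne' (a := 0) (b := 1)
    rw [mul_zero, mul_one] at this
    rw [hI_def, ← integral_Ioc_eq_integral_Ioo, ← intervalIntegral.integral_of_le zero_le_one, this,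
      smul_eq_mul, mul_inv_cancel_left₀ hξ.ne']
  have hsplit : ((∫ η in Ioi ξ, exp (-η ^ 2)) * ∫ η in (0 : ℝ)..ξ, exp (-η ^ 2)) /
      (ξ * exp (-ξ ^ 2)) = (∫ η in Ioi ξ, exp (-η ^ 2)) * (exp (ξ ^ 2) * I) := by
    rw [hF, exp_neg]
    field_simp
  have hC : ENNReal.ofReal (∫ η in Ioi ξ, exp (-η ^ 2)) = ∫⁻ x in Ioo 0 1,
      ENNReal.ofReal (ξ * (1 - x ^ 2) / (2 * x ^ 2)) *
        ENNReal.ofReal (exp (-(ξ * (1 + x ^ 2) / (2 * x)) ^ 2)) := by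
    rw [ofReal_integral_eq_lintegral_ofReal integrable_exp_neg_sq.integrableOn
      (Eventually.of_forall fun η => (exp_pos _).le), lintegral_Ioi_eq_lintegral_Ioo_comp hξ]
  have hI : ENNReal.ofReal (exp (ξ ^ 2) * I)
      = ∫⁻ s in Ioo 0 1, ENNReal.ofReal (exp (ξ ^ 2) * exp (-(ξ * s) ^ 2)) := by
    have hcont : Continuous fun s => exp (ξ ^ 2) * exp (-(ξ * s) ^ 2) := by fun_prop
    rw [← integral_const_mul, ofReal_integral_eq_lintegral_ofReal
      (hcont.integrableOn_Icc.mono_set Ioo_subset_Icc_self)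
      (Eventually.of_forall fun s => by positivity)]
  rw [hsplit, ENNReal.ofReal_mul (setIntegral_nonneg measurableSet_Ioi fun η _ => (exp_pos _).le),
    hC, hI, ← lintegral_lintegral_mul (by fun_prop) (by fun_prop)]
  refine setLIntegral_congr_fun measurableSet_Ioo fun x ⟨hx0, hx1⟩ =>
    setLIntegral_congr_fun measurableSet_Ioo fun s _ => ?_
  have hexp : exp (-(ξ * (1 + x ^ 2) / (2 * x)) ^ 2) * (exp (ξ ^ 2) * exp (-(ξ * s) ^ 2))
      = exp (-(((1 - x ^ 2) ^ 2 + (2 * x * s) ^ 2) / (2 * x) ^ 2) * ξ ^ 2) := by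
    rw [← exp_add, ← exp_add]
    congr 1
    field_simp
    ring
  have h : 0 ≤ 1 - x ^ 2 := by nlinarith
  rw [mul_assoc, ← ENNReal.ofReal_mul (exp_pos _).le,
    ← ENNReal.ofReal_mul (div_nonneg (mul_nonneg hξ.le h) (by positivity)), hexp, kernel]
  ring_nf

lemma lintegral_Ioi_kernel {x : ℝ} (hx : x ∈ Ioo (0 : ℝ) 1) (s : ℝ) :
    ∫⁻ ξ in Ioi (0 : ℝ), ENNReal.ofReal (kernel ξ x s)
      = ENNReal.ofReal ((1 - x ^ 2) / ((1 - x ^ 2) ^ 2 + (2 * x * s) ^ 2)) := by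
  obtain ⟨hx0, hx1⟩ := hx
  have ha : 0 < 1 - x ^ 2 := by nlinarith
  simp only [kernel]
  rw [lintegral_Ioi_ofReal_mul_exp_neg_mul_sq (by positivity) (by positivity)]
  congr 1
  field_simp

lemma measurable_lintegral_kernel :
    Measurable fun p : ℝ × ℝ => ∫⁻ s in Ioo (0 : ℝ) 1, ENNReal.ofReal (kernel p.1 p.2 s) :=
  Measurable.lintegral_prod_right'
    (f := fun q : (ℝ × ℝ) × ℝ => ENNReal.ofReal (kernel q.1.1 q.1.2 q.2))
    (by unfold kernel; fun_prop)

lemma lintegral_lintegral_lintegral_kernel :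
    ∫⁻ ξ in Ioi (0 : ℝ), ∫⁻ x in Ioo 0 1, ∫⁻ s in Ioo 0 1, ENNReal.ofReal (kernel ξ x s)
      = ENNReal.ofReal catalanConstant := calc
  _ = ∫⁻ x in Ioo (0 : ℝ) 1, ∫⁻ ξ in Ioi 0, ∫⁻ s in Ioo 0 1, ENNReal.ofReal (kernel ξ x s) :=
    lintegral_lintegral_swap measurable_lintegral_kernel.aemeasurable
  _ = ∫⁻ x in Ioo (0 : ℝ) 1, ∫⁻ s in Ioo 0 1, ∫⁻ ξ in Ioi 0, ENNReal.ofReal (kernel ξ x s) :=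
    lintegral_congr fun x => lintegral_lintegral_swap (by unfold kernel; fun_prop)
  _ = ∫⁻ x in Ioo (0 : ℝ) 1, ∫⁻ s in Ioo 0 1,
      ENNReal.ofReal ((1 - x ^ 2) / ((1 - x ^ 2) ^ 2 + (2 * x * s) ^ 2)) :=
    setLIntegral_congr_fun measurableSet_Ioo fun x hx =>
      lintegral_congr fun s => lintegral_Ioi_kernel hx s
  _ = ∫⁻ x in Ioo (0 : ℝ) 1, ENNReal.ofReal (arctan x / x) :=
    setLIntegral_congr_fun measurableSet_Ioo fun _ hx => lintegral_Ioo_div_sq_add_mul_sq hx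
  _ = ENNReal.ofReal catalanConstant := lintegral_arctan_div_self

end CatalanIntegral

/-- `(4/√π) ∫₀^∞ (∫_ξ^∞ e^{-η²} dη · ∫₀^ξ e^{-η²} dη) / (ξ e^{-ξ²}) dξ = (4/√π) · G`. -/
theorem integral_green_recessive_eq_catalan :
    (4 / Real.sqrt π) *
      ∫ ξ in Ioi (0 : ℝ),
        ((∫ η in Ioi ξ, Real.exp (-η ^ 2)) * ∫ η in (0 : ℝ)..ξ, Real.exp (-η ^ 2)) /
          (ξ * Real.exp (-ξ ^ 2)) =
    (4 / Real.sqrt π) * catalanConstant := by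
  congr 1
  have hrepr (ξ : ℝ) (hξ : 0 < ξ) :=
    CatalanIntegral.ofReal_integrand_eq_lintegral_lintegral_kernel hξ
  calc _ = ∫ ξ in Ioi (0 : ℝ), (∫⁻ x in Ioo (0 : ℝ) 1, ∫⁻ s in Ioo 0 1,
          ENNReal.ofReal (CatalanIntegral.kernel ξ x s)).toReal :=
        setIntegral_congr_fun measurableSet_Ioi fun ξ hξ => by
          rw [← hrepr ξ hξ, ENNReal.toReal_ofReal (CatalanIntegral.integrand_nonneg hξ)]
    _ = (ENNReal.ofReal catalanConstant).toReal := by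
      rw [integral_toReal
          CatalanIntegral.measurable_lintegral_kernel.lintegral_prod_right'.aemeasurable,
        CatalanIntegral.lintegral_lintegral_lintegral_kernel]
      filter_upwards [ae_restrict_mem measurableSet_Ioi] with ξ hξ
      exact hrepr ξ hξ ▸ ENNReal.ofReal_lt_top
    _ = catalanConstant := ENNReal.toReal_ofReal catalanConstant_nonneg
end

section
/- The integral ∫_0^∞ [∫_0^ξ e^{η²} dη] / (ξ e^{ξ²}) dξ equals π^{3/2}/4. -/
/-!
Substituting `η = ξ sin θ` turns the inner integral into
`(∫₀^ξ e^{η²} dη) / (ξ e^{ξ²}) = ∫₀^{π/2} cos θ · e^{-ξ² cos² θ} dθ`.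
Exchanging the order of integration, each `θ`-slice is a half-line Gaussian integral
`∫₀^∞ c e^{-c² ξ²} dξ = √π / 2` with `c = cos θ`, and integrating this constant over
`(0, π/2)` gives `π^{3/2} / 4`.
-/

open Real MeasureTheory Set

theorem cos_pos_of_mem_Ioo_zero_pi_div_two {θ : ℝ} (hθ : θ ∈ Ioo 0 (π / 2)) : 0 < cos θ :=
  cos_pos_of_mem_Ioo ⟨by linarith [hθ.1, pi_pos], hθ.2⟩

theorem intervalIntegral_exp_sq_div_eq_integral_cos_mul_exp {ξ : ℝ} (hξ : ξ ≠ 0) :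
    (∫ η in (0 : ℝ)..ξ, exp (η ^ 2)) / (ξ * exp (ξ ^ 2)) =
      ∫ θ in Ioo 0 (π / 2), cos θ * exp (-cos θ ^ 2 * ξ ^ 2) := by
  have hsubst := intervalIntegral.integral_deriv_smul_comp (a := 0) (b := π / 2)
      (fun θ _ => (hasDerivAt_sin θ).const_mul ξ)
      (by fun_prop : Continuous fun θ => ξ * cos θ).continuousOn
      (by fun_prop : Continuous fun η : ℝ => exp (η ^ 2))
  simp only [Function.comp_def, sin_zero, sin_pi_div_two, mul_zero, mul_one, smul_eq_mul]
    at hsubst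
  rw [← hsubst, intervalIntegral.integral_of_le (by positivity), integral_Ioc_eq_integral_Ioo,
    ← integral_div]
  refine setIntegral_congr_fun measurableSet_Ioo fun θ _ => ?_
  have hexp : exp ((ξ * sin θ) ^ 2) / exp (ξ ^ 2) = exp (-cos θ ^ 2 * ξ ^ 2) := by
    rw [← exp_sub]
    congr 1
    linear_combination ξ ^ 2 * sin_sq_add_cos_sq θ
  rw [mul_assoc, mul_div_mul_left _ _ hξ, mul_div_assoc, hexp]

theorem integrable_mul_exp_neg_sq_mul_sq {c : ℝ} (hc : c ≠ 0) :
    Integrable fun ξ : ℝ => c * exp (-c ^ 2 * ξ ^ 2) :=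
  (integrable_exp_neg_mul_sq (by positivity)).const_mul c

theorem integral_Ioi_mul_exp_neg_sq_mul_sq {c : ℝ} (hc : 0 < c) :
    ∫ ξ in Ioi (0 : ℝ), c * exp (-c ^ 2 * ξ ^ 2) = √π / 2 := by
  rw [integral_const_mul, integral_gaussian_Ioi, sqrt_div pi_pos.le, sqrt_sq hc.le]
  field_simp

theorem integrable_cos_mul_exp_neg_cos_sq_mul_sq :
    Integrable (Function.uncurry fun ξ θ : ℝ => cos θ * exp (-cos θ ^ 2 * ξ ^ 2))
      ((volume.restrict (Ioi 0)).prod (volume.restrict (Ioo 0 (π / 2)))) := by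
  rw [integrable_prod_iff' (by fun_prop : Continuous _).aestronglyMeasurable]
  have hcos : ∀ᵐ θ ∂volume.restrict (Ioo 0 (π / 2)), 0 < cos θ :=
    (ae_restrict_mem measurableSet_Ioo).mono fun _ => cos_pos_of_mem_Ioo_zero_pi_div_two
  refine ⟨hcos.mono fun θ hθ => (integrable_mul_exp_neg_sq_mul_sq hθ.ne').integrableOn, ?_⟩
  refine (integrable_const (√π / 2)).congr (hcos.mono fun θ hθ => ?_)
  simp only [Function.uncurry_apply_pair, norm_mul, norm_of_nonneg hθ.le,
    norm_of_nonneg (exp_pos _).le]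
  exact (integral_Ioi_mul_exp_neg_sq_mul_sq hθ).symm

/-- `∫₀^∞ (∫₀^ξ e^{η²} dη) / (ξ e^{ξ²}) dξ = π^{3/2} / 4`. -/
theorem integral_dominant_sweep_eq :
    ∫ ξ in Ioi (0 : ℝ),
        (∫ η in (0 : ℝ)..ξ, Real.exp (η ^ 2)) / (ξ * Real.exp (ξ ^ 2)) =
      π ^ ((3 : ℝ) / 2) / 4 := by
  calc
    _ = ∫ ξ in Ioi (0 : ℝ), ∫ θ in Ioo 0 (π / 2), cos θ * exp (-cos θ ^ 2 * ξ ^ 2) :=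
      setIntegral_congr_fun measurableSet_Ioi fun ξ hξ =>
        intervalIntegral_exp_sq_div_eq_integral_cos_mul_exp (ne_of_gt hξ)
    _ = ∫ θ in Ioo 0 (π / 2), ∫ ξ in Ioi (0 : ℝ), cos θ * exp (-cos θ ^ 2 * ξ ^ 2) :=
      integral_integral_swap integrable_cos_mul_exp_neg_cos_sq_mul_sq
    _ = ∫ _ in Ioo 0 (π / 2), √π / 2 :=
      setIntegral_congr_fun measurableSet_Ioo fun θ hθ =>
        integral_Ioi_mul_exp_neg_sq_mul_sq (cos_pos_of_mem_Ioo_zero_pi_div_two hθ)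
    _ = π ^ ((3 : ℝ) / 2) / 4 := by
      rw [setIntegral_const, volume_real_Ioo_of_le (by positivity), smul_eq_mul,
        show (3 : ℝ) / 2 = 1 + 1 / 2 by norm_num, rpow_add pi_pos, rpow_one, ← sqrt_eq_rpow]
      ring
end

section
/- Fix h with 0 < h ≤ 1, and let ε_α > 0 satisfy ε_α α → 0 as α → ∞. Then ∫_0^{ε_α} e^{-2hαη − (1−2h)αη²} dη / ∫_0^1 e^{-2hαη − (1−2h)αη²} dη ~ 2hα ε_α as α → ∞. -/
/-!
Write `ψ(η) = bη + cη²` with `b = 2h`, `c = 1 - 2h`. Substituting `η = εs` turns the numerator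
divided by `ε` into `∫₀¹ exp(-(αε)bs - (αε²)cs²) ds`, a continuous function of `(αε, αε²) → (0, 0)`,
so it tends to `1`. Substituting `η = t/α` turns `α` times the denominator into
`∫₀^α exp(-bt - ct²/α) dt`; since `b + cu ≥ min b (b + c) > 0` on `[0, 1]` the integrand is
dominated by `exp(-min b (b + c) · t)`, and dominated convergence gives `∫₀^∞ exp(-bt) dt = 1/b`.
-/

open Real Filter MeasureTheory Set Topology

theorem tendsto_integral_exp_neg_quadratic_div {b c : ℝ} {ε : ℝ → ℝ}
    (hε : ∀ᶠ α in atTop, ε α ≠ 0) (hεα : Tendsto (fun α => ε α * α) atTop (𝓝 0)) :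
    Tendsto (fun α => (∫ η in 0..ε α, exp (-(α * (b * η + c * η ^ 2)))) / ε α)
      atTop (𝓝 1) := by
  set G : ℝ × ℝ → ℝ := fun p => ∫ s in 0..1, exp (-(p.1 * b * s + p.2 * c * s ^ 2))
  have hG : Continuous G :=
    intervalIntegral.continuous_parametric_intervalIntegral_of_continuous' (by fun_prop) 0 1
  have hε0 : Tendsto ε atTop (𝓝 0) := by
    have hquot := hεα.mul tendsto_inv_atTop_zero
    rw [zero_mul] at hquot
    refine hquot.congr' ?_
    filter_upwards [eventually_ne_atTop 0] with α hα
    field_simp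
  have hscale : Tendsto (fun α => (ε α * α, ε α * (ε α * α))) atTop (𝓝 (0, 0)) := by
    simpa using hεα.prodMk_nhds (hε0.mul hεα)
  have hG0 : G (0, 0) = 1 := by simp [G]
  rw [← hG0]
  refine ((hG.tendsto _).comp hscale).congr' ?_
  filter_upwards [hε] with α hα
  have hsub := intervalIntegral.smul_integral_comp_mul_left
    (fun η => exp (-(α * (b * η + c * η ^ 2)))) (a := 0) (b := 1) (ε α)
  rw [mul_zero, mul_one, smul_eq_mul] at hsub
  rw [eq_div_iff hα, Function.comp_apply, ← hsub, mul_comm]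
  congr 1
  refine intervalIntegral.integral_congr fun s _ => ?_
  ring_nf

theorem min_le_add_mul_of_mem_Icc {b c u : ℝ} (hu : u ∈ Icc (0 : ℝ) 1) :
    min b (b + c) ≤ b + c * u := by
  have h₁ := mul_le_mul_of_nonneg_left (min_le_left b (b + c)) (sub_nonneg.2 hu.2)
  have h₂ := mul_le_mul_of_nonneg_left (min_le_right b (b + c)) hu.1
  linarith

theorem exp_neg_quadratic_le_of_le {b c α t : ℝ} (ht : 0 < t) (htα : t ≤ α) :
    exp (-(b * t + c * α⁻¹ * t ^ 2)) ≤ exp (-min b (b + c) * t) := by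
  have hα : 0 < α := ht.trans_le htα
  have hu := min_le_add_mul_of_mem_Icc (b := b) (c := c)
    (show t / α ∈ Icc (0 : ℝ) 1 from ⟨by positivity, (div_le_one hα).2 htα⟩)
  have hphase : b * t + c * α⁻¹ * t ^ 2 = t * (b + c * (t / α)) := by ring
  rw [exp_le_exp]
  nlinarith

theorem mul_integral_exp_neg_quadratic_eq_setIntegral_indicator {b c α : ℝ} (hα : 0 < α) :
    α * ∫ η in 0..1, exp (-(α * (b * η + c * η ^ 2))) =
      ∫ t in Ioi 0, (Iic α).indicator (fun t => exp (-(b * t + c * α⁻¹ * t ^ 2))) t := by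
  rw [setIntegral_indicator measurableSet_Iic, Ioi_inter_Iic,
    ← intervalIntegral.integral_of_le hα.le]
  have hsub := intervalIntegral.integral_comp_mul_left
    (fun η => exp (-(α * (b * η + c * η ^ 2)))) (a := 0) (b := α) (inv_ne_zero hα.ne')
  rw [mul_zero, inv_mul_cancel₀ hα.ne', inv_inv, smul_eq_mul] at hsub
  rw [← hsub]
  refine intervalIntegral.integral_congr fun t _ => ?_
  field_simp

theorem tendsto_mul_integral_exp_neg_quadratic {b c : ℝ} (hb : 0 < b) (hbc : 0 < b + c) :
    Tendsto (fun α => α * ∫ η in 0..1, exp (-(α * (b * η + c * η ^ 2)))) atTop (𝓝 b⁻¹) := by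
  set m := min b (b + c)
  have hm : 0 < m := lt_min hb hbc
  have hlim : ∫ t in Ioi 0, exp (-b * t) = b⁻¹ := by
    simpa [neg_div_neg_eq, one_div] using integral_exp_mul_Ioi (neg_lt_zero.2 hb) 0
  set f : ℝ → ℝ → ℝ := fun α t => exp (-(b * t + c * α⁻¹ * t ^ 2))
  set F : ℝ → ℝ → ℝ := fun α => (Iic α).indicator (f α)
  have hF : ∀ᶠ α in atTop,
      ∫ t in Ioi 0, F α t = α * ∫ η in 0..1, exp (-(α * (b * η + c * η ^ 2))) := by
    filter_upwards [eventually_gt_atTop 0] with α hα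
    exact (mul_integral_exp_neg_quadratic_eq_setIntegral_indicator hα).symm
  rw [← hlim]
  refine (tendsto_integral_filter_of_dominated_convergence (F := F) (fun t => exp (-m * t))
    ?_ ?_ (integrableOn_exp_mul_Ioi (neg_lt_zero.2 hm) 0) ?_).congr' hF
  · exact Eventually.of_forall fun α =>
      ((by fun_prop : Continuous (f α)).aestronglyMeasurable).indicator measurableSet_Iic
  · refine Eventually.of_forall fun α => ?_
    filter_upwards [ae_restrict_mem measurableSet_Ioi] with t (ht : 0 < t)
    rw [Real.norm_of_nonneg (indicator_nonneg (fun _ _ => (exp_pos _).le) _)]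
    by_cases htα : t ≤ α
    · rw [indicator_of_mem (show t ∈ Iic α from htα)]
      exact exp_neg_quadratic_le_of_le ht htα
    · rw [indicator_of_notMem (show t ∉ Iic α from htα)]
      exact (exp_pos _).le
  · filter_upwards with t
    have hcont : Continuous fun τ => exp (-(b * t + c * τ * t ^ 2)) := by fun_prop
    have hf := (hcont.tendsto 0).comp tendsto_inv_atTop_zero
    simp only [mul_zero, zero_mul, add_zero, Function.comp_def] at hf
    rw [neg_mul]
    refine hf.congr' ?_
    filter_upwards [eventually_ge_atTop t] with α hα
    exact (indicator_of_mem (show t ∈ Iic α from hα) (f α)).symm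

theorem fixation_probability_dominance_asymptotic_general
    (h : ℝ) (hh0 : 0 < h)
    (ε : ℝ → ℝ) (hpos : ∀ α : ℝ, 0 < ε α)
    (hsmall : Tendsto (fun α : ℝ => ε α * α) atTop (nhds 0)) :
    Tendsto
      (fun α : ℝ =>
        ((∫ η in (0 : ℝ)..(ε α),
            Real.exp (-2 * h * α * η - (1 - 2 * h) * α * η ^ 2)) /
            ∫ η in (0 : ℝ)..1,
              Real.exp (-2 * h * α * η - (1 - 2 * h) * α * η ^ 2)) /
          (2 * h * α * ε α))
      atTop (nhds 1) := by
  have hphase : ∀ α η : ℝ, -2 * h * α * η - (1 - 2 * h) * α * η ^ 2 =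
      -(α * (2 * h * η + (1 - 2 * h) * η ^ 2)) := by
    intros; ring
  simp only [hphase]
  have hnum := tendsto_integral_exp_neg_quadratic_div (b := 2 * h) (c := 1 - 2 * h)
    (Eventually.of_forall fun α => (hpos α).ne') hsmall
  have hden := tendsto_mul_integral_exp_neg_quadratic (b := 2 * h) (c := 1 - 2 * h)
    (by positivity) (by norm_num)
  have h2h : 2 * h ≠ 0 := by positivity
  have hlim := hnum.div (hden.const_mul (2 * h)) (by simp [hh0.ne'])
  rw [mul_inv_cancel₀ h2h, div_one] at hlim
  refine hlim.congr fun α => ?_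
  rw [Pi.div_apply]
  ring

/-- For fixed `0 < h ≤ 1` and `ε_α > 0` with `ε_α α → 0`,
`∫₀^{ε_α} e^{-2hαη − (1−2h)αη²} dη / ∫₀^1 e^{-2hαη − (1−2h)αη²} dη ~ 2hα ε_α`. -/
theorem fixation_probability_dominance_asymptotic
    (h : ℝ) (hh0 : 0 < h) (hh1 : h ≤ 1)
    (ε : ℝ → ℝ) (hpos : ∀ α : ℝ, 0 < ε α)
    (hsmall : Tendsto (fun α : ℝ => ε α * α) atTop (nhds 0)) :
    Tendsto
      (fun α : ℝ =>
        ((∫ η in (0 : ℝ)..(ε α),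
            Real.exp (-2 * h * α * η - (1 - 2 * h) * α * η ^ 2)) /
            ∫ η in (0 : ℝ)..1,
              Real.exp (-2 * h * α * η - (1 - 2 * h) * α * η ^ 2)) /
          (2 * h * α * ε α))
      atTop (nhds 1) :=
  fixation_probability_dominance_asymptotic_general h hh0 ε hpos hsmall
end

section
/- For fixed 0 < h ≤ 1, as α → ∞: ∫_0^α e^{-2hη + (2h−1)η²/α} dη − 1/(2h) is asymptotically equivalent to (2h−1)/(4h³α) (when h ≠ 1/2; for h = 1/2 the difference is o(1/α)). -/
/-!
Write `e^{-aη + cη²/α} = e^{-aη} + e^{-aη}(e^{cη²/α} - 1)`, here with `a = 2h` and `c = 2h - 1`.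
The first part integrates over `[0, α]` to `1/a` up to an exponentially small tail. After
multiplication by `α`, the second part has the integrand `α e^{-aη}(e^{cη²/α} - 1)`, which tends
pointwise to `cη² e^{-aη}`. Since `|e^x - 1| ≤ |x| e^{max x 0}` and `η²/α ≤ η` on `[0, α]`, the
integrand is dominated by `|c| η² e^{-(a - max c 0)η}`, which is integrable as soon as `c < a`
(for `a = 2h`, `c = 2h - 1` we have `a - c = 1`). Dominated convergence and
`∫₀^∞ η² e^{-aη} dη = Γ(3)/a³ = 2/a³` give the limit `2c/a³ = (2h - 1)/(4h³)`.
-/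

open Real Filter MeasureTheory Set Topology

theorem abs_exp_sub_one_le_abs_mul_exp_max (x : ℝ) : |exp x - 1| ≤ |x| * exp (max x 0) := by
  rcases le_total 0 x with hx | hx
  · have h1 : 1 - x ≤ (exp x)⁻¹ := by
      simpa [exp_neg, sub_eq_add_neg, add_comm] using add_one_le_exp (-x)
    rw [abs_of_nonneg hx, max_eq_left hx, abs_of_nonneg (sub_nonneg.2 (one_le_exp hx))]
    have h2 := mul_le_mul_of_nonneg_left h1 (exp_pos x).le
    rw [mul_inv_cancel₀ (exp_pos x).ne'] at h2
    linarith
  · rw [abs_of_nonpos hx, max_eq_right hx, exp_zero, mul_one,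
      abs_of_nonpos (sub_nonpos.2 (exp_le_one_iff.2 hx))]
    linarith [add_one_le_exp x]

theorem tendsto_mul_exp_div_sub_one (k : ℝ) :
    Tendsto (fun α : ℝ => α * (exp (k / α) - 1)) atTop (𝓝 k) := by
  have hderiv : HasDerivAt (fun t => exp (k * t)) k 0 := by
    simpa using ((hasDerivAt_id (0 : ℝ)).const_mul k).exp
  refine (hderiv.tendsto_slope_zero_right.comp tendsto_inv_atTop_nhdsGT_zero).congr fun α => ?_
  simp [div_eq_mul_inv]

theorem integral_exp_neg_mul {a : ℝ} (ha : a ≠ 0) (α : ℝ) :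
    ∫ η in (0 : ℝ)..α, exp (-a * η) = (1 - exp (-a * α)) / a := by
  rw [intervalIntegral.integral_comp_mul_left (fun η => exp η) (neg_ne_zero.2 ha), integral_exp]
  simp only [smul_eq_mul, mul_zero, exp_zero]
  field_simp
  ring

theorem integral_sq_mul_exp_neg_mul_Ioi {a : ℝ} (ha : 0 < a) :
    ∫ η in Ioi (0 : ℝ), η ^ 2 * exp (-(a * η)) = 2 / a ^ 3 := by
  have hGamma := integral_rpow_mul_exp_neg_mul_Ioi (a := 3) (by norm_num) ha
  have h3 : Gamma 3 = 2 := by simp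
  norm_num [h3] at hGamma
  rw [hGamma]
  ring

theorem integrableOn_sq_mul_exp_neg_mul_Ioi {a : ℝ} (ha : 0 < a) :
    IntegrableOn (fun η : ℝ => η ^ 2 * exp (-(a * η))) (Ioi 0) := by
  simpa using integrableOn_rpow_mul_exp_neg_mul_rpow (s := 2) (by norm_num) one_pos ha

theorem abs_mul_exp_neg_mul_mul_exp_sub_one_le (a c : ℝ) {α η : ℝ} (hη : 0 < η) (hηα : η ≤ α) :
    |α * (exp (-a * η) * (exp (c * η ^ 2 / α) - 1))|
      ≤ |c| * (η ^ 2 * exp (-((a - max c 0) * η))) := by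
  have hα : 0 < α := hη.trans_le hηα
  have hscale : α * |c * η ^ 2 / α| = |c| * η ^ 2 := by
    rw [abs_div, abs_mul, abs_of_pos hα, abs_of_nonneg (sq_nonneg η)]
    field_simp
  have hmax : max (c * η ^ 2 / α) 0 ≤ max c 0 * η := by
    have hq : η ^ 2 / α ≤ η := by
      rw [div_le_iff₀ hα, sq]
      exact mul_le_mul_of_nonneg_left hηα hη.le
    rw [mul_div_assoc]
    calc max (c * (η ^ 2 / α)) 0 ≤ max c 0 * (η ^ 2 / α) := by
          rw [max_mul_of_nonneg _ _ (by positivity), zero_mul]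
      _ ≤ max c 0 * η := mul_le_mul_of_nonneg_left hq (le_max_right c 0)
  calc |α * (exp (-a * η) * (exp (c * η ^ 2 / α) - 1))|
      = α * exp (-a * η) * |exp (c * η ^ 2 / α) - 1| := by
        rw [abs_mul, abs_mul, abs_of_pos hα, abs_of_pos (exp_pos _), mul_assoc]
    _ ≤ α * exp (-a * η) * (|c * η ^ 2 / α| * exp (max c 0 * η)) := by
        gcongr
        exact (abs_exp_sub_one_le_abs_mul_exp_max _).trans
          (mul_le_mul_of_nonneg_left (exp_le_exp.2 hmax) (abs_nonneg _))
    _ = |c| * (η ^ 2 * exp (-((a - max c 0) * η))) := by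
        rw [show -((a - max c 0) * η) = -a * η + max c 0 * η by ring, exp_add]
        linear_combination (exp (-a * η) * exp (max c 0 * η)) * hscale

theorem tendsto_mul_integral_exp_neg_mul_mul_exp_sub_one {a c : ℝ} (ha : 0 < a) (hca : c < a) :
    Tendsto (fun α : ℝ => α * ∫ η in (0 : ℝ)..α, exp (-a * η) * (exp (c * η ^ 2 / α) - 1))
      atTop (𝓝 (c * (2 / a ^ 3))) := by
  set F : ℝ → ℝ → ℝ := fun α η => α * (exp (-a * η) * (exp (c * η ^ 2 / α) - 1))
  have hm : 0 < a - max c 0 := sub_pos.2 (max_lt hca ha)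
  have hdom : Tendsto (fun α => ∫ η in Ioi 0, (Ioc 0 α).indicator (F α) η) atTop
      (𝓝 (∫ η in Ioi 0, c * (η ^ 2 * exp (-(a * η))))) := by
    refine tendsto_integral_filter_of_dominated_convergence
      (fun η => |c| * (η ^ 2 * exp (-((a - max c 0) * η)))) ?_ ?_
      ((integrableOn_sq_mul_exp_neg_mul_Ioi hm).const_mul _) ?_
    · exact .of_forall fun α =>
        (Continuous.aestronglyMeasurable (by fun_prop)).indicator measurableSet_Ioc
    · refine .of_forall fun α => ae_of_all _ fun η => ?_
      by_cases hη : η ∈ Ioc 0 α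
      · rw [indicator_of_mem hη, norm_eq_abs]
        exact abs_mul_exp_neg_mul_mul_exp_sub_one_le a c hη.1 hη.2
      · rw [indicator_of_notMem hη, norm_zero]
        positivity
    · refine (ae_restrict_iff' measurableSet_Ioi).2 (ae_of_all _ fun η hη => ?_)
      have hlim := (tendsto_mul_exp_div_sub_one (c * η ^ 2)).const_mul (exp (-a * η))
      rw [show exp (-a * η) * (c * η ^ 2) = c * (η ^ 2 * exp (-(a * η))) by ring_nf] at hlim
      refine hlim.congr' ?_
      filter_upwards [eventually_ge_atTop η] with α hηα
      rw [indicator_of_mem (show η ∈ Ioc 0 α from ⟨hη, hηα⟩)]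
      ring
  rw [integral_const_mul, integral_sq_mul_exp_neg_mul_Ioi ha] at hdom
  refine hdom.congr' ?_
  filter_upwards [eventually_gt_atTop 0] with α hα
  rw [← intervalIntegral.integral_const_mul, integral_indicator measurableSet_Ioc,
    Measure.restrict_restrict measurableSet_Ioc,
    inter_eq_self_of_subset_left Ioc_subset_Ioi_self, intervalIntegral.integral_of_le hα.le]

theorem tendsto_integral_exp_neg_mul_add_sq_div_sub_mul {a c : ℝ} (ha : 0 < a) (hca : c < a) :
    Tendsto (fun α : ℝ => ((∫ η in (0 : ℝ)..α, exp (-a * η + c * η ^ 2 / α)) - 1 / a) * α)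
      atTop (𝓝 (c * (2 / a ^ 3))) := by
  have htail : Tendsto (fun α : ℝ => α * exp (-a * α) / a) atTop (𝓝 0) := by
    simpa using (tendsto_rpow_mul_exp_neg_mul_atTop_nhds_zero 1 a ha).div_const a
  have hlim := (tendsto_mul_integral_exp_neg_mul_mul_exp_sub_one ha hca).sub htail
  rw [sub_zero] at hlim
  refine hlim.congr fun α => ?_
  have hsplit : ∫ η in (0 : ℝ)..α, exp (-a * η + c * η ^ 2 / α)
      = (∫ η in (0 : ℝ)..α, exp (-a * η) * (exp (c * η ^ 2 / α) - 1))
        + ∫ η in (0 : ℝ)..α, exp (-a * η) := by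
    rw [← intervalIntegral.integral_add (by apply Continuous.intervalIntegrable; fun_prop)
      (by apply Continuous.intervalIntegrable; fun_prop)]
    congr 1 with η
    rw [exp_add]
    ring
  rw [hsplit, integral_exp_neg_mul ha.ne']
  generalize ∫ η in (0 : ℝ)..α, exp (-a * η) * (exp (c * η ^ 2 / α) - 1) = J
  field_simp
  ring

theorem scale_integral_refined_asymptotic_general (h : ℝ) (hh0 : 0 < h) :
    (h ≠ 1 / 2 →
      Tendsto
        (fun α : ℝ =>
          ((∫ η in (0 : ℝ)..α,
              Real.exp (-2 * h * η + (2 * h - 1) * η ^ 2 / α)) - 1 / (2 * h)) /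
            ((2 * h - 1) / (4 * h ^ 3 * α)))
        atTop (nhds 1))
    ∧
    (h = 1 / 2 →
      Tendsto
        (fun α : ℝ =>
          ((∫ η in (0 : ℝ)..α,
              Real.exp (-2 * h * η + (2 * h - 1) * η ^ 2 / α)) - 1 / (2 * h)) * α)
        atTop (nhds 0)) := by
  have hlim := tendsto_integral_exp_neg_mul_add_sq_div_sub_mul (c := 2 * h - 1)
    (by positivity : 0 < 2 * h) (by linarith)
  simp only [neg_mul] at hlim ⊢
  rw [show (2 * h - 1) * (2 / (2 * h) ^ 3) = (2 * h - 1) / (4 * h ^ 3) by field_simp; ring] at hlim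
  constructor
  · intro hne
    have hc : 2 * h - 1 ≠ 0 := fun hc => hne (by linarith)
    have hone := hlim.mul_const (4 * h ^ 3 / (2 * h - 1))
    rw [show (2 * h - 1) / (4 * h ^ 3) * (4 * h ^ 3 / (2 * h - 1)) = 1 by field_simp] at hone
    refine hone.congr fun α => ?_
    rw [div_div_eq_mul_div]
    ring
  · rintro rfl
    simpa using hlim

/-- For fixed `0 < h ≤ 1`, as `α → ∞`,
`∫₀^α e^{-2hη + (2h−1)η²/α} dη − 1/(2h)` is asymptotically `(2h−1)/(4h³α)`
when `h ≠ 1/2`; for `h = 1/2` the difference is `o(1/α)`. -/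
theorem scale_integral_refined_asymptotic (h : ℝ) (hh0 : 0 < h) (hh1 : h ≤ 1) :
    (h ≠ 1 / 2 →
      Tendsto
        (fun α : ℝ =>
          ((∫ η in (0 : ℝ)..α,
              Real.exp (-2 * h * η + (2 * h - 1) * η ^ 2 / α)) - 1 / (2 * h)) /
            ((2 * h - 1) / (4 * h ^ 3 * α)))
        atTop (nhds 1))
    ∧
    (h = 1 / 2 →
      Tendsto
        (fun α : ℝ =>
          ((∫ η in (0 : ℝ)..α,
              Real.exp (-2 * h * η + (2 * h - 1) * η ^ 2 / α)) - 1 / (2 * h)) * α)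
        atTop (nhds 0)) :=
  scale_integral_refined_asymptotic_general h hh0
end

section
/- The double integral ∫_0^∞ ∫_0^η (1/(ξη)) e^{-ξ² − η²} (∫_0^ξ e^{ζ²} dζ)² dξ dη is finite. -/
open Real MeasureTheory

/-!
With `F x = ∫₀ˣ e^{t²} dt`, comparing `e^{t²}` with `e^{x²}` and with `e^{xt}` on `[0, x]` gives
`F x ≤ x e^{x²}` and `x F x ≤ e^{x²}`, hence `F(ξ)² (1 + ξ²) ≤ 2 ξ² e^{2ξ²}`. Writing
`-ξ² - η² = -(η - ξ)² - 2ξη` and using `ξ ≤ η`, the integrand is bounded on `0 < ξ < η` by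
`2 (1 + ξ²)⁻¹ e^{-(η - ξ)²}`, which is integrable on the whole plane as a convolution integrand.
-/

theorem integrable_mul_comp_sub {G : Type*} [AddGroup G] [MeasurableSpace G] [MeasurableAdd₂ G]
    [MeasurableNeg G] {μ : Measure G} [SFinite μ] [μ.IsAddRightInvariant]
    {f g : G → ℝ} (hf : Integrable f μ) (hg : Integrable g μ) :
    Integrable (fun p : G × G => f p.1 * g (p.2 - p.1)) (μ.prod μ) :=
  (hf.convolution_integrand (ContinuousLinearMap.mul ℝ ℝ) hg).swap

section DawsonBounds

variable {x : ℝ}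

theorem intervalIntegrable_exp_sq (a b : ℝ) :
    IntervalIntegrable (fun t : ℝ => exp (t ^ 2)) volume a b :=
  (continuous_exp.comp (continuous_pow 2)).intervalIntegrable a b

theorem integral_exp_sq_nonneg (hx : 0 ≤ x) : 0 ≤ ∫ t in (0 : ℝ)..x, exp (t ^ 2) :=
  intervalIntegral.integral_nonneg hx fun _ _ => (exp_pos _).le

theorem integral_exp_sq_le_mul_exp_sq (hx : 0 ≤ x) :
    ∫ t in (0 : ℝ)..x, exp (t ^ 2) ≤ x * exp (x ^ 2) := by
  calc ∫ t in (0 : ℝ)..x, exp (t ^ 2) ≤ ∫ _ in (0 : ℝ)..x, exp (x ^ 2) :=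
        intervalIntegral.integral_mono_on hx (intervalIntegrable_exp_sq 0 x)
          intervalIntegrable_const fun t ht => exp_le_exp.2 (by nlinarith [ht.1, ht.2])
    _ = x * exp (x ^ 2) := by simp

theorem mul_integral_exp_sq_le_exp_sq (hx : 0 ≤ x) :
    x * ∫ t in (0 : ℝ)..x, exp (t ^ 2) ≤ exp (x ^ 2) := by
  have hderiv : ∀ t ∈ Set.uIcc 0 x, HasDerivAt (fun t => exp (x * t)) (x * exp (x * t)) t :=
    fun t _ => by simpa [mul_comm] using ((hasDerivAt_id t).const_mul x).exp
  have hint : IntervalIntegrable (fun t => x * exp (x * t)) volume 0 x :=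
    (by fun_prop : Continuous fun t => x * exp (x * t)).intervalIntegrable _ _
  calc x * ∫ t in (0 : ℝ)..x, exp (t ^ 2) = ∫ t in (0 : ℝ)..x, x * exp (t ^ 2) :=
        (intervalIntegral.integral_const_mul _ _).symm
    _ ≤ ∫ t in (0 : ℝ)..x, x * exp (x * t) := by
        refine intervalIntegral.integral_mono_on hx
          ((intervalIntegrable_exp_sq 0 x).const_mul x) hint fun t ht => ?_
        exact mul_le_mul_of_nonneg_left (exp_le_exp.2 (by nlinarith [ht.1, ht.2])) hx
    _ = exp (x ^ 2) - 1 := by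
        rw [intervalIntegral.integral_eq_sub_of_hasDerivAt hderiv hint]
        simp [sq]
    _ ≤ exp (x ^ 2) := by linarith

theorem sq_integral_exp_sq_mul_le (hx : 0 ≤ x) :
    (∫ t in (0 : ℝ)..x, exp (t ^ 2)) ^ 2 * (1 + x ^ 2) ≤ 2 * x ^ 2 * exp (x ^ 2) ^ 2 := by
  have h₀ := integral_exp_sq_nonneg hx
  have h₁ := integral_exp_sq_le_mul_exp_sq hx
  have h₂ := mul_integral_exp_sq_le_exp_sq hx
  have hE := exp_pos (x ^ 2)
  nlinarith [mul_le_mul h₁ h₁ h₀ (by positivity), mul_le_mul h₂ h₂ (by positivity) hE.le,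
    mul_nonneg hx h₀]

end DawsonBounds

theorem continuous_integral_exp_sq : Continuous fun x : ℝ => ∫ t in (0 : ℝ)..x, exp (t ^ 2) :=
  intervalIntegral.continuous_primitive intervalIntegrable_exp_sq 0

theorem dawson_integrand_le {ξ η : ℝ} (hξ : 0 < ξ) (hξη : ξ < η) :
    1 / (ξ * η) * exp (-ξ ^ 2 - η ^ 2) * (∫ t in (0 : ℝ)..ξ, exp (t ^ 2)) ^ 2
      ≤ 2 * (1 + ξ ^ 2)⁻¹ * exp (-(η - ξ) ^ 2) := by
  set F := ∫ t in (0 : ℝ)..ξ, exp (t ^ 2)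
  have hsplit : exp (-ξ ^ 2 - η ^ 2) = exp (-(2 * ξ * η)) * exp (-(η - ξ) ^ 2) := by
    rw [← exp_add]; ring_nf
  have hE : exp (-(2 * ξ * η)) * exp (ξ ^ 2) ^ 2 ≤ 1 := by
    rw [← exp_nat_mul, ← exp_add]
    exact exp_le_one_iff.2 (by push_cast; nlinarith)
  have hF := sq_integral_exp_sq_mul_le hξ.le
  have hD : F ^ 2 * exp (-(2 * ξ * η)) ≤ 2 * ξ ^ 2 / (1 + ξ ^ 2) := by
    rw [le_div_iff₀ (by positivity)]
    calc F ^ 2 * exp (-(2 * ξ * η)) * (1 + ξ ^ 2)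
        = exp (-(2 * ξ * η)) * (F ^ 2 * (1 + ξ ^ 2)) := by ring
      _ ≤ exp (-(2 * ξ * η)) * (2 * ξ ^ 2 * exp (ξ ^ 2) ^ 2) := by gcongr
      _ ≤ 2 * ξ ^ 2 := by nlinarith [exp_pos (-(2 * ξ * η))]
  calc 1 / (ξ * η) * exp (-ξ ^ 2 - η ^ 2) * F ^ 2
      = F ^ 2 * exp (-(2 * ξ * η)) / (ξ * η) * exp (-(η - ξ) ^ 2) := by rw [hsplit]; ring
    _ ≤ 2 * ξ ^ 2 / (1 + ξ ^ 2) / (ξ * ξ) * exp (-(η - ξ) ^ 2) := by gcongr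
    _ = 2 * (1 + ξ ^ 2)⁻¹ * exp (-(η - ξ) ^ 2) := by field_simp

theorem integrable_dawson_majorant :
    Integrable fun p : ℝ × ℝ => 2 * (1 + p.1 ^ 2)⁻¹ * exp (-(p.2 - p.1) ^ 2) := by
  rw [Measure.volume_eq_prod]
  simpa only [mul_assoc] using
    (integrable_mul_comp_sub integrable_inv_one_add_sq
      (by simpa using integrable_exp_neg_mul_sq one_pos)).const_mul 2

/-- The double integral `∫₀^∞ ∫₀^η (1/(ξη)) e^{-ξ²−η²} (∫₀^ξ e^{ζ²} dζ)² dξ dη`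
is finite: its integrand is integrable on `{0 < ξ < η}`. -/
theorem dominant_variance_integral_finite :
    IntegrableOn
      (fun p : ℝ × ℝ =>
        (1 / (p.1 * p.2)) * Real.exp (-p.1 ^ 2 - p.2 ^ 2) *
          (∫ ζ in (0 : ℝ)..p.1, Real.exp (ζ ^ 2)) ^ 2)
      {p : ℝ × ℝ | 0 < p.1 ∧ p.1 < p.2} := by
  have hS : MeasurableSet {p : ℝ × ℝ | 0 < p.1 ∧ p.1 < p.2} :=
    (measurableSet_lt measurable_const measurable_fst).inter
      (measurableSet_lt measurable_fst measurable_snd)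
  have hmeas : Measurable fun p : ℝ × ℝ =>
      (1 / (p.1 * p.2)) * exp (-p.1 ^ 2 - p.2 ^ 2) * (∫ ζ in (0 : ℝ)..p.1, exp (ζ ^ 2)) ^ 2 := by
    have := continuous_integral_exp_sq.measurable
    fun_prop
  refine integrable_dawson_majorant.integrableOn.mono' hmeas.aestronglyMeasurable.restrict
    (ae_restrict_of_forall_mem hS fun p ⟨hp₁, hp₂⟩ => ?_)
  have hp : 0 < p.1 * p.2 := mul_pos hp₁ (hp₁.trans hp₂)
  rw [Real.norm_of_nonneg (by positivity)]
  exact dawson_integrand_le hp₁ hp₂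
end

section
/- For 0 < h < 1, as α → ∞ one has ∫_0^α (1 − e^{-2hξ}) · [2(2h−1)/α] / (2h − 2(2h−1)ξ/α) dξ → log(2h) − log(2(1−h)) = log(h/(1−h)). -/
/-!
With `k = b / α`, the integrand is `k / (a - k ξ) - exp (μ ξ) * (k / (a - k ξ))`. The first
term has antiderivative `-log (a - k ξ)`, so its integral over `[0, α]` is `log a - log (a - b)`
for every `α`. On `[0, α]` the affine denominator stays above `min a (a - b)`, so
`k / (a - k ξ) = O(1 / α)` uniformly, while `∫₀^∞ exp (μ ξ) dξ = 1 / |μ|`; hence the second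
integral is `O(1 / α)`.
-/

open Real Filter Set intervalIntegral MeasureTheory Topology

lemma min_le_sub_mul_of_mem_Icc {a k T ξ : ℝ} (hξ : ξ ∈ Icc 0 T) :
    min a (a - k * T) ≤ a - k * ξ := by
  rcases le_total 0 k with hk | hk
  · exact min_le_of_right_le (by nlinarith [hξ.2])
  · exact min_le_of_left_le (by nlinarith [hξ.1])

lemma abs_div_sub_mul_le {a k T ξ : ℝ} (hm : 0 < min a (a - k * T)) (hξ : ξ ∈ Icc 0 T) :
    |k / (a - k * ξ)| ≤ |k| / min a (a - k * T) := by
  have hle := min_le_sub_mul_of_mem_Icc (a := a) (k := k) hξ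
  rw [abs_div, abs_of_pos (hm.trans_le hle)]
  exact div_le_div_of_nonneg_left (abs_nonneg k) hm hle

lemma continuousOn_div_sub_mul {a k T : ℝ} (hm : 0 < min a (a - k * T)) :
    ContinuousOn (fun ξ => k / (a - k * ξ)) (Icc 0 T) :=
  continuousOn_const.div (by fun_prop) fun _ hξ =>
    (hm.trans_le (min_le_sub_mul_of_mem_Icc hξ)).ne'

lemma integral_div_sub_mul {a k T : ℝ} (hT : 0 ≤ T) (hm : 0 < min a (a - k * T)) :
    ∫ ξ in 0..T, k / (a - k * ξ) = log a - log (a - k * T) := by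
  have hderiv : ∀ ξ ∈ uIcc 0 T,
      HasDerivAt (fun ξ => -log (a - k * ξ)) (k / (a - k * ξ)) ξ := by
    intro ξ hξ
    rw [uIcc_of_le hT] at hξ
    have hpos := hm.trans_le (min_le_sub_mul_of_mem_Icc (k := k) hξ)
    exact ((((hasDerivAt_id ξ).const_mul k).const_sub a).log hpos.ne').neg.congr_deriv
      (by simp [neg_div])
  rw [integral_eq_sub_of_hasDerivAt hderiv
    ((continuousOn_div_sub_mul hm).intervalIntegrable_of_Icc hT)]
  simp only [mul_zero, sub_zero]
  ring

lemma integral_exp_mul_le {μ T : ℝ} (hμ : μ < 0) :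
    ∫ ξ in 0..T, exp (μ * ξ) ≤ -μ⁻¹ := by
  rw [integral_comp_mul_left (fun x => exp x) hμ.ne, integral_exp, smul_eq_mul, mul_zero,
    exp_zero, mul_sub, mul_one, sub_le_iff_le_add, neg_add_cancel]
  exact mul_nonpos_of_nonpos_of_nonneg (inv_lt_zero.2 hμ).le (exp_pos _).le

lemma abs_integral_exp_mul_le {f : ℝ → ℝ} {μ T M : ℝ} (hμ : μ < 0) (hT : 0 ≤ T)
    (hf : IntervalIntegrable f volume 0 T) (hM : ∀ ξ ∈ Icc 0 T, |f ξ| ≤ M) :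
    |∫ ξ in 0..T, exp (μ * ξ) * f ξ| ≤ M * -μ⁻¹ := by
  have hM0 : 0 ≤ M := (abs_nonneg _).trans (hM 0 ⟨le_rfl, hT⟩)
  have hint : IntervalIntegrable (fun ξ => exp (μ * ξ) * f ξ) volume 0 T :=
    hf.continuousOn_mul (by fun_prop)
  calc |∫ ξ in 0..T, exp (μ * ξ) * f ξ|
      ≤ ∫ ξ in 0..T, |exp (μ * ξ) * f ξ| := abs_integral_le_integral_abs hT
    _ ≤ ∫ ξ in 0..T, M * exp (μ * ξ) := by
        have hexp : Continuous fun ξ => M * exp (μ * ξ) := by fun_prop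
        refine integral_mono_on hT hint.abs (hexp.intervalIntegrable _ _) fun ξ hξ => ?_
        rw [abs_mul, abs_exp, mul_comm]
        exact mul_le_mul_of_nonneg_right (hM ξ hξ) (exp_pos _).le
    _ = M * ∫ ξ in 0..T, exp (μ * ξ) := integral_const_mul M _
    _ ≤ M * -μ⁻¹ := mul_le_mul_of_nonneg_left (integral_exp_mul_le hμ) hM0

theorem tendsto_integral_one_sub_exp_mul_div_sub {a b μ : ℝ} (hμ : μ < 0) (ha : 0 < a)
    (hab : 0 < a - b) :
    Tendsto (fun α : ℝ => ∫ ξ in 0..α, (1 - exp (μ * ξ)) * (b / α) / (a - b * ξ / α))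
      atTop (𝓝 (log a - log (a - b))) := by
  have hmα : ∀ α ≠ 0, 0 < min a (a - b / α * α) := fun α hα => by
    rw [div_mul_cancel₀ b hα]
    exact lt_min ha hab
  set remainder : ℝ → ℝ := fun α => ∫ ξ in 0..α, exp (μ * ξ) * ((b / α) / (a - b / α * ξ))
  have hsplit : ∀ α > 0, ∫ ξ in 0..α, (1 - exp (μ * ξ)) * (b / α) / (a - b * ξ / α)
      = (log a - log (a - b)) - remainder α := by
    intro α hα
    have hint : IntervalIntegrable (fun ξ => b / α / (a - b / α * ξ)) volume 0 α :=
      (continuousOn_div_sub_mul (hmα α hα.ne')).intervalIntegrable_of_Icc hα.le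
    have hmain := integral_div_sub_mul hα.le (hmα α hα.ne')
    rw [div_mul_cancel₀ b hα.ne'] at hmain
    rw [← hmain, ← integral_sub hint
        (hint.continuousOn_mul (g := fun ξ => exp (μ * ξ)) (by fun_prop))]
    congr 1 with ξ
    ring
  have hbound : ∀ α > 0, |remainder α| ≤ |b| / min a (a - b) * -μ⁻¹ / α := by
    intro α hα
    have := abs_integral_exp_mul_le hμ hα.le
      ((continuousOn_div_sub_mul (hmα α hα.ne')).intervalIntegrable_of_Icc hα.le)
      fun ξ hξ => abs_div_sub_mul_le (hmα α hα.ne') hξ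
    rw [div_mul_cancel₀ b hα.ne', abs_div, abs_of_pos hα] at this
    exact this.trans_eq (by ring)
  have hremainder : Tendsto remainder atTop (𝓝 0) :=
    squeeze_zero_norm' (eventually_gt_atTop 0 |>.mono hbound)
      (tendsto_const_nhds.div_atTop tendsto_id)
  simpa using (hremainder.const_sub (log a - log (a - b))).congr'
    (eventually_gt_atTop 0 |>.mono fun α hα => (hsplit α hα).symm)

/-- For `0 < h < 1`, as `α → ∞`,
`∫₀^α (1 − e^{-2hξ}) · (2(2h−1)/α) / (2h − 2(2h−1)ξ/α) dξ → log(h/(1−h))`. -/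
theorem integral_dominance_correction_tendsto
    (h : ℝ) (hh0 : 0 < h) (hh1 : h < 1) :
    Tendsto
      (fun α : ℝ =>
        ∫ ξ in (0 : ℝ)..α,
          (1 - Real.exp (-2 * h * ξ)) * (2 * (2 * h - 1) / α) /
            (2 * h - 2 * (2 * h - 1) * ξ / α))
      atTop (nhds (Real.log (h / (1 - h)))) := by
  have hlimit : log (2 * h) - log (2 * h - 2 * (2 * h - 1)) = log (h / (1 - h)) := by
    rw [← log_div (by positivity) (by linarith),
      show 2 * h - 2 * (2 * h - 1) = 2 * (1 - h) by ring, mul_div_mul_left _ _ two_ne_zero]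
  rw [← hlimit]
  exact tendsto_integral_one_sub_exp_mul_div_sub (by linarith) (by linarith) (by linarith)
end
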